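/- arXiv:2504.19468 — 4 statements merged into one kernel-verified Lean document; each statement's English description precedes it below -/
import Mathlib

section
/- Let G = G₁ × G₂, where G₁ and G₂ are finitely generated groups, each with finitely many conjugacy classes, with generating sets S and T respectively, and equip G with the generating set S ⊔ T (each s ∈ S identified with (s,1) and each t ∈ T with (1,t)). If both G₁ and G₂ have an independent signature sequence, then G has an independent signature sequence. -/
/-!
A word over `ι ⊕ κ` of signature `(α, β)` is the same thing as an interleaving pattern (a word
over `Bool` with `∑ α` letters `true` and `∑ β` letters `false`) together with a word over `ι` of
signature `α` and a word over `κ` of signature `β`; its value lies in the class `(c, d)` of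
`G₁ × G₂` iff the two subwords evaluate into `c` and `d`. Hence `V_{(α, β)}(c, d)` is the number
of interleavings times `V_α(c) · V_β(d)`, so the signature matrix of `G₁ × G₂` is a positive
diagonal matrix times the Kronecker product of the signature matrices of `G₁` and `G₂`, and is
invertible when they are.
-/

/-- Words over the alphabet `ι` with prescribed signature `α`: the word `w` has signature `α`
if each letter `i` occurs exactly `α i` times in `w`. -/
def sigSet {ι : Type*} [DecidableEq ι] (α : ι → ℕ) : Set (List ι) :=
  {w | ∀ i, w.count i = α i}

/-- The signature vector `V_α` of a signature `α`, with respect to a family of group elements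
`s : ι → G` and an enumeration `C : Fin r → ConjClasses G` of (some) conjugacy classes: its
`j`-th entry is the number of words of signature `α` whose product lies in the class `C j`. -/
noncomputable def sigVec {ι G : Type*} [DecidableEq ι] [Group G] (s : ι → G) {r : ℕ}
    (C : Fin r → ConjClasses G) (α : ι → ℕ) : Fin r → ℚ :=
  fun j => ((sigSet α ∩ {w | (w.map s).prod ∈ (C j).carrier}).ncard : ℚ)

/-- The group `G`, with generating family `s : ι → G`, has an *independent signature sequence*:
there are an enumeration `C₁, …, C_r` of all conjugacy classes of `G` and signatures
`α₁, …, α_r` whose signature vectors `V_{α₁}, …, V_{α_r}` are linearly independent. -/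
def HasISS {ι G : Type*} [DecidableEq ι] [Group G] (s : ι → G) : Prop :=
  ∃ (r : ℕ) (C : Fin r → ConjClasses G) (α : Fin r → ι → ℕ),
    Function.Bijective C ∧ LinearIndependent ℚ (fun i => sigVec s C (α i))

/-- The group `G`, with generating family `s : ι → G`, has an independent signature sequence
whose independent signature matrix is lower triangular with respect to some ordering of the
conjugacy classes of `G`. -/
def HasISSLT {ι G : Type*} [DecidableEq ι] [Group G] (s : ι → G) : Prop :=
  ∃ (r : ℕ) (C : Fin r → ConjClasses G) (α : Fin r → ι → ℕ),
    Function.Bijective C ∧ LinearIndependent ℚ (fun i => sigVec s C (α i)) ∧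
    ∀ i j : Fin r, i < j → sigVec s C (α i) j = 0

namespace List

variable {ι κ : Type*}

theorem count_inl_eq_count_filterMap_getLeft [BEq (ι ⊕ κ)] [LawfulBEq (ι ⊕ κ)] [BEq ι]
    [LawfulBEq ι] (w : List (ι ⊕ κ)) (i : ι) :
    w.count (Sum.inl i) = (w.filterMap Sum.getLeft?).count i := by
  rw [count_filterMap, count_eq_countP]
  exact countP_congr fun a _ => by cases a <;> simp

theorem count_inr_eq_count_filterMap_getRight [BEq (ι ⊕ κ)] [LawfulBEq (ι ⊕ κ)] [BEq κ]
    [LawfulBEq κ] (w : List (ι ⊕ κ)) (k : κ) :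
    w.count (Sum.inr k) = (w.filterMap Sum.getRight?).count k := by
  rw [count_filterMap, count_eq_countP]
  exact countP_congr fun a _ => by cases a <;> simp

theorem count_true_map_isLeft (w : List (ι ⊕ κ)) :
    (w.map Sum.isLeft).count true = (w.filterMap Sum.getLeft?).length := by
  induction w with
  | nil => rfl
  | cons a w ih => cases a <;> simp [filterMap_cons, ih]

theorem count_false_map_isLeft (w : List (ι ⊕ κ)) :
    (w.map Sum.isLeft).count false = (w.filterMap Sum.getRight?).length := by
  induction w with
  | nil => rfl
  | cons a w ih => cases a <;> simp [filterMap_cons, ih]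

theorem prod_map_sumElim_inl_inr {M N : Type*} [Monoid M] [Monoid N] (f : ι → M) (g : κ → N)
    (w : List (ι ⊕ κ)) :
    (w.map (Sum.elim (fun i => (f i, 1)) (fun k => (1, g k)))).prod
      = (((w.filterMap Sum.getLeft?).map f).prod, ((w.filterMap Sum.getRight?).map g).prod) := by
  induction w with
  | nil => rfl
  | cons a w ih => cases a <;> simp [filterMap_cons, ih]

def splitSum (w : List (ι ⊕ κ)) : List Bool × List ι × List κ :=
  (w.map Sum.isLeft, w.filterMap Sum.getLeft?, w.filterMap Sum.getRight?)

theorem splitSum_injective : Function.Injective (splitSum (ι := ι) (κ := κ)) := by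
  intro w w' h
  induction w generalizing w' with
  | nil => cases w' <;> simp_all [splitSum]
  | cons a w ih =>
    obtain _ | ⟨b, w'⟩ := w'
    · simp [splitSum] at h
    · have hhead : a = b ∧ splitSum w = splitSum w' := by
        cases a <;> cases b <;> simp_all [splitSum, filterMap_cons]
      rw [hhead.1, ih hhead.2]

theorem exists_splitSum_eq (bs : List Bool) (u : List ι) (v : List κ)
    (hu : bs.count true = u.length) (hv : bs.count false = v.length) :
    ∃ w, splitSum w = (bs, u, v) := by
  induction bs generalizing u v with
  | nil =>
    obtain rfl : u = [] := by simpa [eq_comm] using hu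
    obtain rfl : v = [] := by simpa [eq_comm] using hv
    exact ⟨[], rfl⟩
  | cons b bs ih =>
    cases b with
    | true =>
      obtain _ | ⟨i, u⟩ := u
      · simp at hu
      obtain ⟨w, hw⟩ := ih u v (by simpa using hu) (by simpa using hv)
      exact ⟨Sum.inl i :: w, by simp_all [splitSum, filterMap_cons]⟩
    | false =>
      obtain _ | ⟨k, v⟩ := v
      · simp at hv
      obtain ⟨w, hw⟩ := ih u v (by simpa using hu) (by simpa using hv)
      exact ⟨Sum.inr k :: w, by simp_all [splitSum, filterMap_cons]⟩

end List

section Signature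

variable {ι κ : Type*} [DecidableEq ι] [DecidableEq κ]

theorem length_eq_sum_of_mem_sigSet [Fintype ι] {α : ι → ℕ} {w : List ι} (hw : w ∈ sigSet α) :
    w.length = ∑ i, α i := by
  rw [← Multiset.coe_card, ← Multiset.sum_count_eq_card (s := Finset.univ) (by simp)]
  exact Finset.sum_congr rfl fun i _ => (Multiset.coe_count i w).trans (hw i)

theorem sigSet_finite [Fintype ι] (α : ι → ℕ) : (sigSet α).Finite :=
  (List.finite_length_eq ι _).subset fun _ => length_eq_sum_of_mem_sigSet

theorem sigSet_nonempty [Fintype ι] (α : ι → ℕ) : (sigSet α).Nonempty := by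
  refine ⟨Finset.univ.toList.flatMap fun i => List.replicate (α i) i, fun j => ?_⟩
  simp [List.count_flatMap, List.count_replicate, Function.comp_def]

theorem ncard_sigSet_pos [Fintype ι] (α : ι → ℕ) : 0 < (sigSet α).ncard :=
  (Set.ncard_pos (sigSet_finite α)).mpr (sigSet_nonempty α)

theorem mem_sigSet_sumElim {α : ι → ℕ} {β : κ → ℕ} {w : List (ι ⊕ κ)} :
    w ∈ sigSet (Sum.elim α β) ↔
      w.filterMap Sum.getLeft? ∈ sigSet α ∧ w.filterMap Sum.getRight? ∈ sigSet β := by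
  simp only [sigSet, Set.mem_ofPred_eq, Sum.forall, Sum.elim_inl, Sum.elim_inr,
    List.count_inl_eq_count_filterMap_getLeft, List.count_inr_eq_count_filterMap_getRight]

end Signature

theorem ncard_sigSet_sumElim_inter_prod {ι κ M N : Type*} [DecidableEq ι] [DecidableEq κ]
    [Fintype ι] [Fintype κ] [Monoid M] [Monoid N] (f : ι → M) (g : κ → N)
    (α : ι → ℕ) (β : κ → ℕ) (P : Set M) (Q : Set N) :
    (sigSet (Sum.elim α β) ∩
        {w | (w.map (Sum.elim (fun i => (f i, 1)) (fun k => (1, g k)))).prod ∈ P ×ˢ Q}).ncard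
      = (sigSet fun b : Bool => bif b then ∑ i, α i else ∑ k, β k).ncard *
          ((sigSet α ∩ {u | (u.map f).prod ∈ P}).ncard *
            (sigSet β ∩ {v | (v.map g).prod ∈ Q}).ncard) := by
  set shapes := sigSet fun b : Bool => bif b then ∑ i, α i else ∑ k, β k
  have mem_shapes {bs : List Bool} :
      bs ∈ shapes ↔ bs.count true = ∑ i, α i ∧ bs.count false = ∑ k, β k := by
    simp [shapes, sigSet, Bool.forall_bool, and_comm]
  have hpre : sigSet (Sum.elim α β) ∩
        {w | (w.map (Sum.elim (fun i => (f i, 1)) (fun k => (1, g k)))).prod ∈ P ×ˢ Q}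
      = List.splitSum ⁻¹' (shapes ×ˢ (sigSet α ∩ {u | (u.map f).prod ∈ P}) ×ˢ
          (sigSet β ∩ {v | (v.map g).prod ∈ Q})) := by
    ext w
    simp only [Set.mem_inter_iff, Set.mem_preimage, Set.mem_prod, Set.mem_ofPred_eq,
      List.splitSum, mem_sigSet_sumElim, List.prod_map_sumElim_inl_inr, mem_shapes,
      List.count_true_map_isLeft, List.count_false_map_isLeft]
    constructor
    · rintro ⟨⟨hu, hv⟩, hP, hQ⟩
      exact ⟨⟨length_eq_sum_of_mem_sigSet hu, length_eq_sum_of_mem_sigSet hv⟩, ⟨hu, hP⟩, hv, hQ⟩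
    · rintro ⟨-, ⟨hu, hP⟩, hv, hQ⟩
      exact ⟨⟨hu, hv⟩, hP, hQ⟩
  have hrange : shapes ×ˢ (sigSet α ∩ {u | (u.map f).prod ∈ P}) ×ˢ
      (sigSet β ∩ {v | (v.map g).prod ∈ Q}) ⊆ Set.range List.splitSum := by
    rintro ⟨bs, u, v⟩ ⟨hbs, ⟨hu, -⟩, hv, -⟩
    rw [mem_shapes] at hbs
    exact List.exists_splitSum_eq bs u v
      (hbs.1.trans (length_eq_sum_of_mem_sigSet hu).symm)
      (hbs.2.trans (length_eq_sum_of_mem_sigSet hv).symm)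
  rw [hpre, Set.ncard_preimage_of_injective_subset_range List.splitSum_injective hrange,
    Set.ncard_prod, Set.ncard_prod]

section ConjClasses

variable {G₁ G₂ : Type*} [Group G₁] [Group G₂]

theorem isConj_prod_iff {a b : G₁ × G₂} : IsConj a b ↔ IsConj a.1 b.1 ∧ IsConj a.2 b.2 := by
  simp only [isConj_iff]
  constructor
  · rintro ⟨c, rfl⟩
    exact ⟨⟨c.1, rfl⟩, ⟨c.2, rfl⟩⟩
  · rintro ⟨⟨c₁, h₁⟩, ⟨c₂, h₂⟩⟩
    exact ⟨(c₁, c₂), Prod.ext h₁ h₂⟩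

def ConjClasses.prodEquiv : ConjClasses G₁ × ConjClasses G₂ ≃ ConjClasses (G₁ × G₂) :=
  (Setoid.prodQuotientEquiv _ _).trans
    (Quotient.congrRight fun _ _ => isConj_prod_iff.symm)

theorem ConjClasses.prodEquiv_mk_mk (a : G₁) (b : G₂) :
    prodEquiv (ConjClasses.mk a, ConjClasses.mk b) = ConjClasses.mk (a, b) :=
  rfl

theorem ConjClasses.carrier_prodEquiv (c : ConjClasses G₁) (d : ConjClasses G₂) :
    (prodEquiv (c, d)).carrier = c.carrier ×ˢ d.carrier := by
  obtain ⟨a, rfl⟩ := c.mk_surjective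
  obtain ⟨b, rfl⟩ := d.mk_surjective
  ext x
  simp only [prodEquiv_mk_mk, Set.mem_prod, mem_carrier_iff_mk_eq, mk_eq_mk_iff_isConj,
    isConj_prod_iff]

end ConjClasses

theorem Matrix.linearIndependent_rows_reindex_diagonal_mul_kronecker {K l m n : Type*} [Field K]
    [Fintype l] [Fintype m] [Fintype n] [DecidableEq l] [DecidableEq m] [DecidableEq n]
    {A : Matrix m m K} {B : Matrix n n K} {d : m × n → K} (e : l ≃ m × n)
    (hA : LinearIndependent K A.row) (hB : LinearIndependent K B.row) (hd : ∀ p, d p ≠ 0) :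
    LinearIndependent K fun p q => d (e p) * (A (e p).1 (e q).1 * B (e p).2 (e q).2) := by
  set N := (diagonal d * kroneckerMap (· * ·) A B).submatrix e e
  have hdetA : A.det ≠ 0 :=
    ((isUnit_iff_isUnit_det A).mp (linearIndependent_rows_iff_isUnit.mp hA)).ne_zero
  have hdetB : B.det ≠ 0 :=
    ((isUnit_iff_isUnit_det B).mp (linearIndependent_rows_iff_isUnit.mp hB)).ne_zero
  have hdet : N.det ≠ 0 := by
    rw [det_submatrix_equiv_self, det_mul, det_diagonal, det_kronecker]
    exact mul_ne_zero (Finset.prod_ne_zero_iff.mpr fun p _ => hd p) <|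
      mul_ne_zero (pow_ne_zero _ hdetA) (pow_ne_zero _ hdetB)
  have hN : LinearIndependent K N.row :=
    linearIndependent_rows_iff_isUnit.mpr ((isUnit_iff_isUnit_det N).mpr hdet.isUnit)
  convert hN using 1
  ext p q
  simp only [N, row, submatrix_apply, diagonal_mul, kroneckerMap_apply]

theorem sigVec_sumElim {ι κ G₁ G₂ : Type*} [DecidableEq ι] [DecidableEq κ] [Fintype ι]
    [Fintype κ] [Group G₁] [Group G₂] (s : ι → G₁) (t : κ → G₂) {r : ℕ}
    (C₁ : Fin r → ConjClasses G₁) (C₂ : Fin r → ConjClasses G₂) (α : ι → ℕ) (β : κ → ℕ) :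
    sigVec (Sum.elim (fun i => ((s i, 1) : G₁ × G₂)) (fun k => (1, t k)))
        (fun q => ConjClasses.prodEquiv (C₁ q, C₂ q)) (Sum.elim α β)
      = fun q => (sigSet fun b : Bool => bif b then ∑ i, α i else ∑ k, β k).ncard *
          (sigVec s C₁ α q * sigVec t C₂ β q) := by
  ext q
  simp only [sigVec, ConjClasses.carrier_prodEquiv, ncard_sigSet_sumElim_inter_prod,
    Nat.cast_mul]

theorem hasISS_prod_general {ι κ G₁ G₂ : Type} [Fintype ι] [Fintype κ] [DecidableEq ι] [DecidableEq κ]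
    [Group G₁] [Group G₂] (s : ι → G₁) (t : κ → G₂)
    (h₁ : HasISS s) (h₂ : HasISS t) :
    HasISS (Sum.elim (fun i => ((s i, 1) : G₁ × G₂)) (fun k => ((1, t k) : G₁ × G₂))) := by
  obtain ⟨r₁, C₁, α, hC₁, hα⟩ := h₁
  obtain ⟨r₂, C₂, β, hC₂, hβ⟩ := h₂
  let e : Fin (r₁ * r₂) ≃ Fin r₁ × Fin r₂ := finProdFinEquiv.symm
  refine ⟨r₁ * r₂, fun q => ConjClasses.prodEquiv (C₁ (e q).1, C₂ (e q).2),
    fun p => Sum.elim (α (e p).1) (β (e p).2),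
    ConjClasses.prodEquiv.bijective.comp ((hC₁.prodMap hC₂).comp e.bijective), ?_⟩
  have hkron := Matrix.linearIndependent_rows_reindex_diagonal_mul_kronecker
    (d := fun p => ((sigSet fun b : Bool => bif b then ∑ i, α p.1 i else ∑ k, β p.2 k).ncard : ℚ))
    e hα hβ fun p => Nat.cast_ne_zero.mpr (ncard_sigSet_pos _).ne'
  simp only [sigVec_sumElim]
  exact hkron

/-- Let `G = G₁ × G₂` with `G₁, G₂` finitely generated groups having finitely many conjugacy
classes, with generating families `s : ι → G₁` and `t : κ → G₂`, and equip `G` with the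
generating family indexed by `ι ⊕ κ` (with `s i` identified with `(s i, 1)` and `t k` with
`(1, t k)`).  If both `G₁` and `G₂` have an independent signature sequence, then so does `G`. -/
theorem hasISS_prod {ι κ G₁ G₂ : Type} [Fintype ι] [Fintype κ] [DecidableEq ι] [DecidableEq κ]
    [Group G₁] [Group G₂] (s : ι → G₁) (t : κ → G₂)
    (hs : Subgroup.closure (Set.range s) = ⊤) (ht : Subgroup.closure (Set.range t) = ⊤)
    [Finite (ConjClasses G₁)] [Finite (ConjClasses G₂)]
    (h₁ : HasISS s) (h₂ : HasISS t) :
    HasISS (Sum.elim (fun i => ((s i, 1) : G₁ × G₂)) (fun k => ((1, t k) : G₁ × G₂))) :=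
  hasISS_prod_general s t h₁ h₂
end

section
/- Let α₁,…,α_m ∈ ℂⁿ with m ≥ n, where αᵢ = (a_{i,1},…,a_{i,n}), and set γ(αᵢ) = {j ∈ [n] : a_{i,j} ≠ 0}. Suppose (a) |γ(α₁)| = 1, (b) |⋃_{i=1}^{m} γ(αᵢ)| = n, and (c) for each k ∈ {2,…,m}, |γ(α_k) ∖ ⋃_{i=1}^{k-1} γ(αᵢ)| ≤ 1. Then there exists a subsequence α_{p₁},…,α_{pₙ} (p₁ < ⋯ < pₙ) such that (1) α_{p₁},…,α_{pₙ} are linearly independent, and (2) there is a permutation of the columns transforming the n×n matrix with rows α_{p₁},…,α_{pₙ} into a lower triangular matrix (necessarily with nonzero diagonal entries). -/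
/-!
Let `t j` be the first row in which column `j` has a nonzero entry. Hypothesis (b) says every
column has such a row, and (a), (c) say that each row is `t j` for at most one `j`, so `t` is
injective. Sorting the columns by `t` gives a permutation `σ` and rows `p = t ∘ σ`,
`p₁ < ⋯ < pₙ`; row `pᵢ` is nonzero in column `σ i` and, by minimality of `t`, vanishes in every
column `σ j` with `j > i`. The rows `α_{pᵢ}` restricted to the columns `σ` then form a lower
triangular matrix with nonzero diagonal, hence with nonzero determinant.
-/

open Function

theorem linearIndependent_of_triangular {ι κ R : Type*} [CommRing R] [IsDomain R] [Fintype ι]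
    [LinearOrder ι] (v : ι → κ → R) (c : ι → κ) (hzero : ∀ i j, i < j → v i (c j) = 0)
    (hdiag : ∀ i, v i (c i) ≠ 0) : LinearIndependent R v := by
  let M : Matrix ι ι R := Matrix.of fun i j => v i (c j)
  have hM : M.IsLowerTriangular := fun i j hij => hzero i j hij
  have hdet : M.det ≠ 0 := by
    rw [Matrix.det_of_isLowerTriangular M hM]
    exact Finset.prod_ne_zero_iff.2 fun i _ => hdiag i
  exact (Matrix.linearIndependent_rows_of_det_ne_zero hdet).of_comp (LinearMap.funLeft R R c)

theorem exists_ne_zero_of_ncard_iUnion_eq {ι κ R : Type*} [Finite κ] [Zero R] (a : ι → κ → R)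
    (h : (⋃ i, {j | a i j ≠ 0}).ncard = Nat.card κ) (j : κ) : ∃ i, a i j ≠ 0 := by
  have huniv : (⋃ i, {j | a i j ≠ 0}) = Set.univ := by
    by_contra hne
    exact (Set.ncard_lt_card hne).ne h
  simpa using huniv.ge (Set.mem_univ j)

section FirstNonzeroRow

variable {ι κ R : Type*} [LinearOrder ι] [Zero R] (a : ι → κ → R)

theorem exists_firstNonzeroRow [WellFoundedLT ι] (hcov : ∀ j, ∃ i, a i j ≠ 0) :
    ∃ t : κ → ι, ∀ j, a (t j) j ≠ 0 ∧ ∀ i < t j, a i j = 0 := by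
  have hmin : ∀ j, ∃ i, a i j ≠ 0 ∧ ∀ i' < i, a i' j = 0 := fun j => by
    obtain ⟨i, hi, hlt⟩ := wellFounded_lt.has_min {i | a i j ≠ 0} (hcov j)
    exact ⟨i, hi, fun i' hi' => not_not.1 fun h => hlt i' h hi'⟩
  choose t ht using hmin
  exact ⟨t, ht⟩

theorem injective_of_firstNonzeroRow [Finite κ] {t : κ → ι}
    (ht : ∀ j, a (t j) j ≠ 0 ∧ ∀ i < t j, a i j = 0)
    (hnew : ∀ k, ({j | a k j ≠ 0} \ ⋃ i : {i // i < k}, {j | a i.1 j ≠ 0}).ncard ≤ 1) :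
    Injective t := by
  have hmem : ∀ j, j ∈ {x | a (t j) x ≠ 0} \ ⋃ i : {i // i < t j}, {x | a i.1 x ≠ 0} :=
    fun j => ⟨(ht j).1, by simpa using fun i hi => (ht j).2 i hi⟩
  intro j j' hjj'
  exact (Set.ncard_le_one).1 (hnew (t j)) j (hmem j) j' (hjj' ▸ hmem j')

end FirstNonzeroRow

theorem exists_strictMono_lowerTriangular {ι R : Type*} [LinearOrder ι] [WellFoundedLT ι]
    [Zero R] {n : ℕ} (a : ι → Fin n → R)
    (hcov : ∀ j, ∃ i, a i j ≠ 0)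
    (hnew : ∀ k, ({j | a k j ≠ 0} \ ⋃ i : {i // i < k}, {j | a i.1 j ≠ 0}).ncard ≤ 1) :
    ∃ p : Fin n → ι, StrictMono p ∧ ∃ σ : Equiv.Perm (Fin n),
      (∀ i j, i < j → a (p i) (σ j) = 0) ∧ ∀ i, a (p i) (σ i) ≠ 0 := by
  obtain ⟨t, ht⟩ := exists_firstNonzeroRow a hcov
  have hsort : StrictMono (t ∘ Tuple.sort t) := (Tuple.monotone_sort t).strictMono_of_injective
    ((injective_of_firstNonzeroRow a ht hnew).comp (Tuple.sort t).injective)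
  exact ⟨t ∘ Tuple.sort t, hsort, Tuple.sort t,
    fun i j hij => (ht _).2 _ (hsort hij), fun i => (ht _).1⟩

theorem exists_lowerTriangular_subsequence_general {m n : ℕ} (hm : 0 < m)
    (a : Fin m → Fin n → ℂ)
    (h1 : {j | a ⟨0, hm⟩ j ≠ 0}.ncard = 1)
    (h2 : (⋃ i : Fin m, {j | a i j ≠ 0}).ncard = n)
    (h3 : ∀ k : Fin m, 0 < (k : ℕ) →
      ({j | a k j ≠ 0} \ ⋃ i : {i : Fin m // i < k}, {j | a i.1 j ≠ 0}).ncard ≤ 1) :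
    ∃ p : Fin n → Fin m, StrictMono p ∧
      LinearIndependent ℂ (fun i => a (p i)) ∧
      ∃ σ : Equiv.Perm (Fin n),
        (∀ i j : Fin n, i < j → a (p i) (σ j) = 0) ∧ (∀ i : Fin n, a (p i) (σ i) ≠ 0) := by
  have hcov := exists_ne_zero_of_ncard_iUnion_eq a (h2.trans (Nat.card_fin n).symm)
  have hnew : ∀ k : Fin m,
      ({j | a k j ≠ 0} \ ⋃ i : {i : Fin m // i < k}, {j | a i.1 j ≠ 0}).ncard ≤ 1 := by
    intro k
    rcases Nat.eq_zero_or_pos k with hk | hk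
    · obtain rfl : k = ⟨0, hm⟩ := Fin.ext hk
      exact (Set.ncard_le_ncard Set.sdiff_subset).trans h1.le
    · exact h3 k hk
  obtain ⟨p, hp, σ, hzero, hdiag⟩ := exists_strictMono_lowerTriangular a hcov hnew
  exact ⟨p, hp, linearIndependent_of_triangular _ σ hzero hdiag, σ, hzero, hdiag⟩

/-- Let `α₁, …, α_m ∈ ℂⁿ` with `m ≥ n` (and `m ≥ 1`), with `γ(αᵢ) = {j : αᵢⱼ ≠ 0}`.
If (a) `|γ(α₁)| = 1`, (b) `|⋃ᵢ γ(αᵢ)| = n`, and (c) for every `k ≥ 2`,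
`|γ(α_k) ∖ ⋃_{i<k} γ(αᵢ)| ≤ 1`, then there is a subsequence `α_{p₁}, …, α_{pₙ}`
(`p₁ < ⋯ < pₙ`) which is linearly independent and such that, after a suitable permutation `σ`
of the columns, the `n × n` matrix with rows `α_{pᵢ}` becomes lower triangular, necessarily
with nonzero diagonal entries. -/
theorem exists_lowerTriangular_subsequence {m n : ℕ} (hm : 0 < m) (hmn : n ≤ m)
    (a : Fin m → Fin n → ℂ)
    (h1 : {j | a ⟨0, hm⟩ j ≠ 0}.ncard = 1)
    (h2 : (⋃ i : Fin m, {j | a i j ≠ 0}).ncard = n)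
    (h3 : ∀ k : Fin m, 0 < (k : ℕ) →
      ({j | a k j ≠ 0} \ ⋃ i : {i : Fin m // i < k}, {j | a i.1 j ≠ 0}).ncard ≤ 1) :
    ∃ p : Fin n → Fin m, StrictMono p ∧
      LinearIndependent ℂ (fun i => a (p i)) ∧
      ∃ σ : Equiv.Perm (Fin n),
        (∀ i j : Fin n, i < j → a (p i) (σ j) = 0) ∧ (∀ i : Fin n, a (p i) (σ i) ≠ 0) :=
  exists_lowerTriangular_subsequence_general hm a h1 h2 h3
end

section
/- Let (W,S) be a finite Coxeter system and let Cus₁,…,Cus_q be all cuspidal conjugacy classes of W, ordered so that l(Cus₁) ≤ ⋯ ≤ l(Cus_q). Suppose that whenever l(Cus_k) = l(Cus_{k+1}) (there are finitely many such indices k, and all ties are between consecutive pairs only), there exists a word w_k ∈ φ⁻¹(Cus_k) with |w_k| = l(Cus_k) and E_{sig(w_k)} ∩ φ⁻¹(Cus_{k+1}) = ∅. Then W has a cuspidal signature sequence whose cuspidal signature matrix is lower triangular with respect to the ordering Cus₁,…,Cus_q. In particular, if l(Cusᵢ) ≠ l(Cus_j) for all i ≠ j, then W has a cuspidal signature sequence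 with a lower triangular cuspidal signature matrix. -/
/-- A conjugacy class `c` of a Coxeter group `W` with Coxeter system `cs` is *cuspidal* if it
does not meet any proper (standard) parabolic subgroup `W_J`, `J ⊊ S`. -/
def IsCuspidal {B W : Type*} [Group W] {M : CoxeterMatrix B}
    (cs : CoxeterSystem M W) (c : ConjClasses W) : Prop :=
  ∀ J : Set B, J ≠ Set.univ → ∀ g ∈ c.carrier, g ∉ Subgroup.closure (cs.simple '' J)

/-- The minimal Coxeter length `l(C)` of an element of the conjugacy class `C`. -/
noncomputable def conjClassLength {B W : Type*} [Group W] {M : CoxeterMatrix B}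
    (cs : CoxeterSystem M W) (c : ConjClasses W) : ℕ :=
  sInf (cs.length '' c.carrier)

lemma Matrix.linearIndependent_rows_of_isLowerTriangular {m K : Type*} [Fintype m]
    [LinearOrder m] [Field K] (A : Matrix m m K) (hA : A.IsLowerTriangular)
    (hd : ∀ i, A i i ≠ 0) : LinearIndependent K A.row := by
  rw [Matrix.linearIndependent_rows_iff_isUnit, Matrix.isUnit_iff_isUnit_det,
    Matrix.det_of_isLowerTriangular A hA, isUnit_iff_ne_zero]
  exact Finset.prod_ne_zero_iff.mpr fun i _ => hd i

lemma mem_sigSet_count_iff_perm {ι : Type*} [DecidableEq ι] {u w : List ι} :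
    u ∈ sigSet w.count ↔ u.Perm w :=
  List.perm_iff_count.symm

lemma sigSet_count_finite {ι : Type*} [DecidableEq ι] (w : List ι) :
    (sigSet w.count).Finite :=
  w.permutations.finite_toSet.subset fun _ hu =>
    List.mem_permutations.mpr (mem_sigSet_count_iff_perm.mp hu)

section sigVec

variable {ι G : Type*} [DecidableEq ι] [Group G] {s : ι → G} {r : ℕ}
  {C : Fin r → ConjClasses G}

lemma sigVec_eq_zero_of_forall_notMem {α : ι → ℕ} {j : Fin r}
    (h : ∀ u ∈ sigSet α, (u.map s).prod ∉ (C j).carrier) : sigVec s C α j = 0 := by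
  have hempty : sigSet α ∩ {u | (u.map s).prod ∈ (C j).carrier} = ∅ :=
    Set.eq_empty_of_forall_notMem fun u hu => h u hu.1 hu.2
  simp [sigVec, hempty]

lemma sigVec_count_ne_zero {w : List ι} {j : Fin r} (hw : (w.map s).prod ∈ (C j).carrier) :
    sigVec s C w.count j ≠ 0 := by
  have hfin := (sigSet_count_finite w).inter_of_left {u | (u.map s).prod ∈ (C j).carrier}
  have hw' : w ∈ sigSet w.count ∩ {u | (u.map s).prod ∈ (C j).carrier} := ⟨fun _ => rfl, hw⟩
  simpa [sigVec, Set.ncard_eq_zero hfin, ← Set.nonempty_iff_ne_empty] using ⟨w, hw'⟩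

end sigVec

namespace CoxeterSystem

variable {B W : Type*} [Group W] {M : CoxeterMatrix B} (cs : CoxeterSystem M W)

lemma conjClassLength_le_length {c : ConjClasses W} {u : List B}
    (hu : (u.map cs.simple).prod ∈ c.carrier) : conjClassLength cs c ≤ u.length :=
  (Nat.sInf_le (Set.mem_image_of_mem _ hu)).trans (cs.length_wordProd_le u)

lemma exists_word_length_eq_conjClassLength (c : ConjClasses W) :
    ∃ w : List B, (w.map cs.simple).prod ∈ c.carrier ∧ w.length = conjClassLength cs c := by
  obtain ⟨g, rfl⟩ := ConjClasses.exists_rep c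
  obtain ⟨x, hx, hxl⟩ := Nat.sInf_mem (Set.image_nonempty.mpr ⟨g, ConjClasses.mem_carrier_mk⟩ :
    (cs.length '' (ConjClasses.mk g).carrier).Nonempty)
  obtain ⟨w, hw, rfl⟩ := cs.exists_isReduced x
  exact ⟨w, hx, hw.symm.trans hxl⟩

lemma sigVec_count_eq_zero_of_length_lt [DecidableEq B] {r : ℕ} {C : Fin r → ConjClasses W}
    {w : List B} {j : Fin r} (hw : w.length < conjClassLength cs (C j)) :
    sigVec cs.simple C w.count j = 0 :=
  sigVec_eq_zero_of_forall_notMem fun _ hu hmem => hw.not_ge <|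
    (mem_sigSet_count_iff_perm.mp hu).length_eq ▸ cs.conjClassLength_le_length hmem

end CoxeterSystem

theorem hasCSSLT_of_length_conditions_general {B W : Type} [DecidableEq B]
    [Group W] {M : CoxeterMatrix B} (cs : CoxeterSystem M W)
    (q : ℕ) (Cu : Fin q → ConjClasses W)
    (hmono : Monotone fun j => conjClassLength cs (Cu j))
    (hties : ∀ i j : Fin q, i < j →
      conjClassLength cs (Cu i) = conjClassLength cs (Cu j) → (j : ℕ) = (i : ℕ) + 1)
    (hwit : ∀ (k : Fin q) (hk : (k : ℕ) + 1 < q),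
      conjClassLength cs (Cu k) = conjClassLength cs (Cu ⟨(k : ℕ) + 1, hk⟩) →
      ∃ w : List B, (w.map cs.simple).prod ∈ (Cu k).carrier ∧
        w.length = conjClassLength cs (Cu k) ∧
        ∀ u : List B, (∀ i, u.count i = w.count i) →
          (u.map cs.simple).prod ∉ (Cu ⟨(k : ℕ) + 1, hk⟩).carrier) :
    ∃ β : Fin q → B → ℕ,
      LinearIndependent ℚ (fun j => sigVec cs.simple Cu (β j)) ∧
      ∀ i j : Fin q, i < j → sigVec cs.simple Cu (β i) j = 0 := by
  have hword : ∀ k : Fin q, ∃ w : List B, (w.map cs.simple).prod ∈ (Cu k).carrier ∧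
      w.length = conjClassLength cs (Cu k) ∧ ∀ (hk : (k : ℕ) + 1 < q),
        conjClassLength cs (Cu k) = conjClassLength cs (Cu ⟨(k : ℕ) + 1, hk⟩) →
          sigVec cs.simple Cu w.count ⟨(k : ℕ) + 1, hk⟩ = 0 := by
    intro k
    by_cases htie : ∃ hk : (k : ℕ) + 1 < q,
        conjClassLength cs (Cu k) = conjClassLength cs (Cu ⟨(k : ℕ) + 1, hk⟩)
    · obtain ⟨hk, htie⟩ := htie
      obtain ⟨w, hmem, hlen, havoid⟩ := hwit k hk htie
      exact ⟨w, hmem, hlen, fun _ _ => sigVec_eq_zero_of_forall_notMem havoid⟩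
    · obtain ⟨w, hmem, hlen⟩ := cs.exists_word_length_eq_conjClassLength (Cu k)
      exact ⟨w, hmem, hlen, fun hk htie' => (htie ⟨hk, htie'⟩).elim⟩
  choose w hmem hlen havoid using hword
  have hzero : ∀ i j : Fin q, i < j → sigVec cs.simple Cu (w i).count j = 0 := by
    intro i j hij
    rcases (hmono hij.le).lt_or_eq with hlt | heq
    · exact cs.sigVec_count_eq_zero_of_length_lt (hlen i ▸ hlt)
    · obtain ⟨j, hjq⟩ := j
      obtain rfl : j = (i : ℕ) + 1 := hties i _ hij heq
      exact havoid i hjq heq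
  refine ⟨fun k => (w k).count, ?_, hzero⟩
  exact Matrix.linearIndependent_rows_of_isLowerTriangular
    (Matrix.of fun i j => sigVec cs.simple Cu (w i).count j) (fun i j hij => hzero i j hij)
    fun k => sigVec_count_ne_zero (hmem k)

/-- Let `(W,S)` be a finite Coxeter system and `Cus₁, …, Cus_q` its cuspidal conjugacy
classes, ordered so that `l(Cus₁) ≤ ⋯ ≤ l(Cus_q)`, where all ties of the lengths occur only
between consecutive pairs.  If for each `k` with `l(Cus_k) = l(Cus_{k+1})` there is a word
`w_k` with `φ(w_k) ∈ Cus_k`, `|w_k| = l(Cus_k)` and `E_{sig(w_k)} ∩ φ⁻¹(Cus_{k+1}) = ∅`,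
then `W` has a cuspidal signature sequence whose cuspidal signature matrix is lower triangular
with respect to the ordering `Cus₁, …, Cus_q`. -/
theorem hasCSSLT_of_length_conditions {B W : Type} [DecidableEq B] [Fintype B]
    [Group W] [Finite W] {M : CoxeterMatrix B} (cs : CoxeterSystem M W)
    (q : ℕ) (Cu : Fin q → ConjClasses W)
    (hinj : Function.Injective Cu) (hcusp : ∀ j, IsCuspidal cs (Cu j))
    (hall : ∀ c : ConjClasses W, IsCuspidal cs c → ∃ j, Cu j = c)
    (hmono : Monotone fun j => conjClassLength cs (Cu j))
    (hties : ∀ i j : Fin q, i < j →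
      conjClassLength cs (Cu i) = conjClassLength cs (Cu j) → (j : ℕ) = (i : ℕ) + 1)
    (hwit : ∀ (k : Fin q) (hk : (k : ℕ) + 1 < q),
      conjClassLength cs (Cu k) = conjClassLength cs (Cu ⟨(k : ℕ) + 1, hk⟩) →
      ∃ w : List B, (w.map cs.simple).prod ∈ (Cu k).carrier ∧
        w.length = conjClassLength cs (Cu k) ∧
        ∀ u : List B, (∀ i, u.count i = w.count i) →
          (u.map cs.simple).prod ∉ (Cu ⟨(k : ℕ) + 1, hk⟩).carrier) :
    ∃ β : Fin q → B → ℕ,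
      LinearIndependent ℚ (fun j => sigVec cs.simple Cu (β j)) ∧
      ∀ i j : Fin q, i < j → sigVec cs.simple Cu (β i) j = 0 :=
  hasCSSLT_of_length_conditions_general cs q Cu hmono hties hwit
end

section
/- Let Sₙ be the symmetric group on n letters with Coxeter generating set T = {(1,2),(2,3),…,(n−1,n)} (so Sₙ is the Coxeter group of type A_{n−1}). For a partition μ = (p₁,…,p_k) of n, let C^μ denote the conjugacy class of permutations of cycle type μ, and define the signature α(μ) = (1,…,1,0,1,…,1,0,…,0,1,…,1) ∈ ℕ^{n−1} consisting of blocks of p₁−1 ones, p₂−1 ones, …, p_k−1 ones, separated by single zeros. Then E_{α(μ)} ⊆ φ⁻¹(C^μ) and |E_{α(μ)}| = (n−k)!. Consequently, if μ₁,…,μ_r are all partitions of n with μ_j having k_j parts, then α(μ₁),…,α(μ_r) is an independent signature sequence of Sₙ whose independent signature matrix (with respect to the ordering C^{μ₁},…,C^{μ_r}) is the diagonal matrix diag((n−k₁)!,…,(n−k_r)!). -/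
/-- The Coxeter generating set `T = {(1,2), (2,3), …, (n-1,n)}` of the symmetric group `Sₙ`. -/
def transposGen (n : ℕ) : Fin (n - 1) → Equiv.Perm (Fin n) :=
  fun i => Equiv.swap ⟨i.1, by have := i.2; omega⟩ ⟨i.1 + 1, by have := i.2; omega⟩

/-- The signature `α(μ)` attached to a partition `μ = (p₁ ≥ … ≥ p_k)` of `n`: it consists of
blocks of `p₁ - 1`, `p₂ - 1`, …, `p_k - 1` ones separated by single zeros.  Concretely, the
`j`-th entry (`j` counted from `1`) is `0` exactly when `j` is one of the partial sums
`p₁, p₁ + p₂, …` of the parts, sorted in decreasing order. -/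
def sigOfPartition (n : ℕ) (μ : n.Partition) : Fin (n - 1) → ℕ :=
  fun j =>
    if ((j : ℕ) + 1) ∈ ((μ.parts.sort (· ≤ ·)).reverse.scanl (· + ·) 0) then 0 else 1

/-- The conjugacy class `C^μ` of the symmetric group `Sₙ` consisting of the permutations of
cycle type `μ`, for `μ` a partition of `n` (in Mathlib, `Equiv.Perm.cycleType` records only
the parts of size at least `2`). -/
def cycleTypeClass (n : ℕ) (μ : n.Partition) : Set (Equiv.Perm (Fin n)) :=
  {π | π.cycleType = μ.parts.filter (fun p => 2 ≤ p)}

/-!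
Since `α(μ) ≤ 1`, a word of signature `α(μ)` is an ordering of the letters `s_x` with
`α(μ)_x = 1`, i.e. of the letters inside the consecutive blocks of sizes `p₁, …, p_k`.
Letters of different blocks commute, and the product of the letters `s_a, …, s_{a+m-1}` of one
block, in any order, is an `(m+1)`-cycle on `{a, …, a+m}`: moving the largest letter `s_b` to
the front conjugates it by the letters before it, which turns it into a transposition attaching
`b+1` to the cycle formed by the other letters. So every such word multiplies to a
permutation of cycle type `μ`, there are `(n-k)!` of them, and since a partition is determined
by its parts `≥ 2`, the signature matrix is diagonal with nonzero entries.
-/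

open Equiv Equiv.Perm List

theorem List.prod_map_filter_mul_prod_map_filter_not_of_commute {ι M : Type*} [Monoid M]
    (p : ι → Prop) [DecidablePred p] (f : ι → M) (l : List ι)
    (hcomm : ∀ x ∈ l, ∀ y ∈ l, p x → ¬p y → Commute (f x) (f y)) :
    ((l.filter p).map f).prod * ((l.filter fun x => ¬p x).map f).prod = (l.map f).prod := by
  induction l with
  | nil => simp
  | cons c t ih =>
    have ih := ih fun x hx y hy => hcomm x (mem_cons_of_mem c hx) y (mem_cons_of_mem c hy)
    by_cases hc : p c
    · simp only [decide_not] at ih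
      simp [hc, mul_assoc, ih]
    · have hc' : Commute ((t.filter p).map f).prod (f c) :=
        Commute.list_prod_left _ _ fun g hg => by
          obtain ⟨x, hx, rfl⟩ := mem_map.1 hg
          exact hcomm x (mem_cons_of_mem c (mem_filter.1 hx).1) c mem_cons_self
            (by simpa using (mem_filter.1 hx).2) hc
      simp only [filter_cons, hc, decide_false, Bool.false_eq_true, if_false, not_false_eq_true,
        decide_true, if_true, map_cons, prod_cons, map_cons]
      rw [← mul_assoc, hc'.eq, mul_assoc, ih]

theorem List.exists_cons_isRotated {α : Type*} {l : List α} {x : α} (hx : x ∈ l) :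
    ∃ l', (x :: l') ~r l := by
  obtain ⟨u, v, rfl⟩ := append_of_mem hx
  exact ⟨v ++ u, by simpa using (isRotated_append (l := u) (l' := x :: v)).symm⟩

theorem List.cycleType_formPerm_of_nodup {α : Type*} [DecidableEq α] [Fintype α] {l : List α}
    (hl : l.Nodup) : (formPerm l).cycleType = if 2 ≤ l.length then {l.length} else 0 := by
  split_ifs with h
  · rw [(isCycle_formPerm hl h).cycleType, support_formPerm_of_nodup l hl
      (by rintro x rfl; simp at h), card_toFinset, dedup_eq_self.2 hl]
  · obtain ⟨⟩ | ⟨x, ⟨⟩ | ⟨y, l⟩⟩ := l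
    · simp
    · simp
    · simp at h

theorem List.mem_scanl_add_self (b : ℕ) (q : List ℕ) : b ∈ q.scanl (· + ·) b := by
  cases q <;> simp [scanl_cons]

theorem List.le_of_mem_scanl_add {b x : ℕ} {q : List ℕ} (hx : x ∈ q.scanl (· + ·) b) :
    b ≤ x := by
  induction q generalizing b with
  | nil => simp_all
  | cons p q ih =>
    rcases mem_cons.1 (scanl_cons ▸ hx) with rfl | hx
    · rfl
    · exact (Nat.le_add_right b p).trans (ih hx)

section WordProduct

variable {n : ℕ}

theorem prod_transposGen_apply_of_forall {w : List (Fin (n - 1))} {z : Fin n}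
    (h : ∀ x ∈ w, z.1 < x.1 ∨ x.1 + 1 < z.1) : (w.map (transposGen n)).prod z = z := by
  induction w with
  | nil => rfl
  | cons x w ih =>
    rw [map_cons, prod_cons, Perm.mul_apply, ih fun y hy => h y (mem_cons_of_mem x hy)]
    have := h x mem_cons_self
    refine swap_apply_of_ne_of_ne ?_ ?_ <;> rw [Ne, Fin.ext_iff] <;> dsimp only <;> omega

theorem disjoint_prod_transposGen {u v : List (Fin (n - 1))} {c : ℕ}
    (hu : ∀ x ∈ u, x.1 + 1 < c) (hv : ∀ y ∈ v, c ≤ y.1) :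
    Disjoint (u.map (transposGen n)).prod (v.map (transposGen n)).prod := by
  intro z
  by_cases hz : z.1 < c
  · exact Or.inr (prod_transposGen_apply_of_forall fun y hy => Or.inl (hz.trans_le (hv y hy)))
  · exact Or.inl (prod_transposGen_apply_of_forall fun x hx => Or.inr (by have := hu x hx; omega))

theorem commute_transposGen {x y : Fin (n - 1)} (h : x.1 + 1 < y.1) :
    Commute (transposGen n x) (transposGen n y) := by
  simpa using (disjoint_prod_transposGen (u := [x]) (v := [y]) (by simpa using h)
    (by simp)).commute

theorem prod_transposGen_apply_mem_Icc {w : List (Fin (n - 1))} {a b : ℕ}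
    (hw : ∀ x ∈ w, a ≤ x.1 ∧ x.1 < b) {z : Fin n} (hz : a ≤ z.1 ∧ z.1 ≤ b) :
    a ≤ ((w.map (transposGen n)).prod z).1 ∧ ((w.map (transposGen n)).prod z).1 ≤ b := by
  set σ := (w.map (transposGen n)).prod
  by_contra hout
  have hfix : σ (σ z) = σ z := prod_transposGen_apply_of_forall fun x hx => by
    have := hw x hx
    omega
  rw [σ.injective hfix] at hout
  exact hout hz

theorem exists_formPerm_eq_prod_transposGen {a m : ℕ} (hm : a + m < n)
    {w : List (Fin (n - 1))} (hw : w.Nodup) (hmem : ∀ x, x ∈ w ↔ a ≤ x.1 ∧ x.1 < a + m) :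
    w.length = m ∧ ∃ l : List (Fin n), l.Nodup ∧ l.length = m + 1 ∧
      (∀ z, z ∈ l ↔ a ≤ z.1 ∧ z.1 ≤ a + m) ∧
      (w.map (transposGen n)).prod = l.formPerm := by
  induction m generalizing w with
  | zero =>
    obtain rfl : w = [] := eq_nil_iff_forall_not_mem.2 fun x hx => by
      have := (hmem x).1 hx
      omega
    refine ⟨rfl, [⟨a, by omega⟩], nodup_singleton _, rfl, fun z => ?_, by simp⟩
    rw [mem_singleton, Fin.ext_iff]
    dsimp only
    omega
  | succ m ih =>
    set t : Fin (n - 1) := ⟨a + m, by omega⟩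
    obtain ⟨u, v, rfl⟩ := append_of_mem ((hmem t).2 ⟨by simp [t], by simp [t]⟩)
    obtain ⟨htuv, huv⟩ := nodup_cons.1 (nodup_middle.1 hw)
    have hmem' : ∀ x, x ∈ u ++ v ↔ a ≤ x.1 ∧ x.1 < a + m := fun x => by
      have hx := hmem x
      rw [perm_middle.mem_iff, mem_cons, Fin.ext_iff] at hx
      by_cases hxt : x.1 = a + m
      · exact iff_of_false (fun h => htuv ((Fin.ext hxt : x = t) ▸ h)) (by omega)
      · rw [or_iff_right hxt] at hx
        rw [hx]
        omega
    obtain ⟨hlen, l, hl, hllen, hlmem, hprod⟩ := ih (by omega) huv hmem'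
    have hu : ∀ x ∈ u, a ≤ x.1 ∧ x.1 < a + m := fun x hx =>
      (hmem' x).1 (mem_append_left v hx)
    set U := (u.map (transposGen n)).prod
    set bot : Fin n := ⟨a + m, by omega⟩
    set top : Fin n := ⟨a + m + 1, by omega⟩
    have hUbot : U bot ∈ l := (hlmem _).2 (prod_transposGen_apply_mem_Icc hu (by simp [bot]))
    have hUtop : U top = top := prod_transposGen_apply_of_forall fun x hx => by
      have := hu x hx
      simp only [top]
      omega
    obtain ⟨l', hrot⟩ := exists_cons_isRotated hUbot
    have htop : top ∉ U bot :: l' := fun h => by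
      have := (hlmem top).1 (hrot.mem_iff.1 h)
      simp [top] at this
    refine ⟨?_, top :: U bot :: l', nodup_cons.2 ⟨htop, hrot.nodup_iff.2 hl⟩,
      by rw [length_cons, hrot.perm.length_eq, hllen], fun z => ?_, ?_⟩
    · simp only [length_append, length_cons] at hlen ⊢
      omega
    · rw [mem_cons, hrot.mem_iff, hlmem, Fin.ext_iff]
      dsimp only [top]
      omega
    · rw [map_append, prod_append, map_cons, prod_cons, ← mul_assoc,
        show transposGen n t = swap bot top from rfl, mul_swap_eq_swap_mul, hUtop, mul_assoc,
        ← prod_append, ← map_append, hprod, formPerm_eq_of_isRotated hl hrot.symm,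
        formPerm_cons_cons, Equiv.swap_comm]

end WordProduct

section Blocks

/-- For `q = [p₁, …, p_k]`, the letter `t` joins two points of the same block of the
decomposition of `[a, a + p₁ + ⋯ + p_k)` into consecutive intervals of lengths
`p₁, …, p_k`. -/
def IsBlockLetter (q : List ℕ) (a t : ℕ) : Prop :=
  a ≤ t ∧ t + 1 < a + q.sum ∧ t + 1 ∉ q.scanl (· + ·) a

theorem not_isBlockLetter_nil (a t : ℕ) : ¬IsBlockLetter [] a t := by
  simp only [IsBlockLetter, sum_nil]
  omega

theorem isBlockLetter_cons_iff_of_lt {p a t : ℕ} (q : List ℕ) (ht : t + 1 < a + p) :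
    IsBlockLetter (p :: q) a t ↔ a ≤ t := by
  simp only [IsBlockLetter, sum_cons, scanl_cons, mem_cons, not_or]
  refine ⟨fun h => h.1, fun h => ⟨h, by omega, by omega, fun hq => ?_⟩⟩
  have := le_of_mem_scanl_add hq
  omega

theorem isBlockLetter_cons_iff_of_le {p a t : ℕ} (q : List ℕ) (ht : a + p ≤ t + 1) :
    IsBlockLetter (p :: q) a t ↔ IsBlockLetter q (a + p) t := by
  simp only [IsBlockLetter, sum_cons, scanl_cons, mem_cons, not_or]
  constructor
  · rintro ⟨-, hts, -, htq⟩
    have : t + 1 ≠ a + p := fun h => htq (h ▸ mem_scanl_add_self (a + p) q)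
    exact ⟨by omega, by omega, htq⟩
  · rintro ⟨hat, hts, htq⟩
    exact ⟨by omega, by omega, by omega, htq⟩

variable {n : ℕ}

theorem cycleType_prod_transposGen_of_mem_iff {q : List ℕ} (hq : ∀ p ∈ q, 0 < p) {a : ℕ}
    (ha : a + q.sum ≤ n) {w : List (Fin (n - 1))} (hw : w.Nodup)
    (hmem : ∀ x, x ∈ w ↔ IsBlockLetter q a x.1) :
    (w.map (transposGen n)).prod.cycleType = ↑(q.filter (2 ≤ ·)) ∧
      w.length + q.length = q.sum := by
  induction q generalizing a w with
  | nil =>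
    obtain rfl : w = [] :=
      eq_nil_iff_forall_not_mem.2 fun x hx => not_isBlockLetter_nil a x ((hmem x).1 hx)
    simp
  | cons p q ih =>
    have hp := hq p mem_cons_self
    rw [sum_cons] at ha
    let P : Fin (n - 1) → Prop := fun x => x.1 + 1 < a + p
    have hleft : ∀ x, x ∈ w.filter P ↔ a ≤ x.1 ∧ x.1 < a + (p - 1) := fun x => by
      rw [mem_filter, hmem, decide_eq_true_iff]
      by_cases hx : P x
      · rw [isBlockLetter_cons_iff_of_lt q hx]
        exact ⟨fun h => ⟨h.1, by omega⟩, fun h => ⟨h.1, hx⟩⟩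
      · exact ⟨fun h => absurd h.2 hx, fun h => absurd (by omega) hx⟩
    have hright : ∀ x, x ∈ w.filter (¬P ·) ↔ IsBlockLetter q (a + p) x.1 := fun x => by
      rw [mem_filter, hmem, decide_eq_true_iff]
      by_cases hx : P x
      · exact ⟨fun h => absurd hx h.2, fun h => absurd hx (by have := h.1; omega)⟩
      · rw [isBlockLetter_cons_iff_of_le q (not_lt.1 hx)]
        exact and_iff_left hx
    obtain ⟨hlen₁, l, hl, hllen, -, hprod₁⟩ :=
      exists_formPerm_eq_prod_transposGen (by omega) (hw.filter _) hleft
    obtain ⟨hct₂, hlen₂⟩ :=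
      ih (fun p' hp' => hq p' (mem_cons_of_mem p hp')) (by omega) (hw.filter _) hright
    have hcomm : ∀ x ∈ w, ∀ y ∈ w, P x → ¬P y →
        Commute (transposGen n x) (transposGen n y) := fun x _ y hy hx hy' =>
      commute_transposGen (hx.trans_le ((hright y).1 (mem_filter.2 ⟨hy, decide_eq_true hy'⟩)).1)
    have hdisj : Disjoint l.formPerm ((w.filter (¬P ·)).map (transposGen n)).prod :=
      hprod₁ ▸ disjoint_prod_transposGen (fun x hx => of_decide_eq_true (mem_filter.1 hx).2)
        fun y hy => ((hright y).1 hy).1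
    rw [← prod_map_filter_mul_prod_map_filter_not_of_commute P _ w hcomm, hprod₁,
      hdisj.cycleType_mul, cycleType_formPerm_of_nodup hl, hllen, hct₂,
      show p - 1 + 1 = p by omega, length_eq_length_filter_add (fun x => decide (P x))]
    refine ⟨?_, ?_⟩
    · by_cases h : 2 ≤ p <;> simp [h]
    · simp only [decide_not] at hlen₂
      simp only [sum_cons, length_cons]
      omega

end Blocks

theorem Nat.Partition.parts_eq_filter_add_replicate {n : ℕ} (μ : n.Partition) :
    μ.parts =
      μ.parts.filter (2 ≤ ·) + Multiset.replicate (n - (μ.parts.filter (2 ≤ ·)).sum) 1 := by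
  have hones : μ.parts.filter (¬2 ≤ ·) =
      Multiset.replicate (Multiset.card (μ.parts.filter (¬2 ≤ ·))) 1 :=
    Multiset.eq_replicate_card.2 fun b hb => by
      have := μ.parts_pos (Multiset.mem_filter.1 hb).1
      have := (Multiset.mem_filter.1 hb).2
      omega
  have hsum := μ.parts_sum
  rw [← Multiset.filter_add_not (2 ≤ ·) μ.parts, Multiset.sum_add, hones,
    Multiset.sum_replicate, smul_eq_mul, mul_one] at hsum
  conv_lhs => rw [← Multiset.filter_add_not (2 ≤ ·) μ.parts, hones]
  congr 2
  omega

theorem Nat.Partition.ext_of_filter_two_le {n : ℕ} {μ ν : n.Partition}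
    (h : μ.parts.filter (2 ≤ ·) = ν.parts.filter (2 ≤ ·)) : μ = ν := by
  ext1
  rw [μ.parts_eq_filter_add_replicate, ν.parts_eq_filter_add_replicate, h]

section Signature

variable {ι : Type*} [DecidableEq ι] {α : ι → ℕ} {w : List ι}

/-- The set `E_α` of the paper. -/
def signatureWords (α : ι → ℕ) : Set (List ι) := {w | ∀ k, w.count k = α k}

theorem mem_iff_of_mem_signatureWords (hw : w ∈ signatureWords α) (k : ι) :
    k ∈ w ↔ 0 < α k := by
  rw [← count_pos_iff, hw k]

theorem nodup_of_mem_signatureWords (hα : ∀ k, α k ≤ 1) (hw : w ∈ signatureWords α) :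
    w.Nodup :=
  nodup_iff_count_le_one.2 fun k => hw k ▸ hα k

theorem signatureWords_eq_setOf_perm {w₀ : List ι} (hw₀ : w₀ ∈ signatureWords α) :
    signatureWords α = {w | w ~ w₀} := by
  ext w
  simp only [signatureWords, Set.mem_ofPred_eq, perm_iff_count, hw₀ _]

theorem ncard_setOf_perm {l : List ι} (hl : l.Nodup) : {w | w ~ l}.ncard = l.length.factorial := by
  rw [show {w | w ~ l} = ↑l.permutations.toFinset by ext; simp [mem_permutations],
    Set.ncard_coe_finset, toFinset_card_of_nodup (nodup_permutations _ hl), length_permutations]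

theorem filter_mem_signatureWords [Fintype ι] (hα : ∀ k, α k ≤ 1) :
    Finset.univ.toList.filter (α · = 1) ∈ signatureWords α := fun k => by
  have hnd := (Finset.nodup_toList Finset.univ).filter (α · = 1)
  by_cases hk : α k = 1
  · rw [count_eq_one_of_mem hnd (by simp [hk]), hk]
  · rw [count_eq_zero_of_not_mem (by simp [hk])]
    have := hα k
    omega

end Signature

section Partition

variable {n : ℕ}

def Nat.Partition.sortedParts (μ : n.Partition) : List ℕ := (μ.parts.sort (· ≤ ·)).reverse

theorem Nat.Partition.coe_sortedParts (μ : n.Partition) :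
    (μ.sortedParts : Multiset ℕ) = μ.parts := by
  rw [Nat.Partition.sortedParts, Multiset.coe_reverse, Multiset.sort_eq]

theorem Nat.Partition.sum_sortedParts (μ : n.Partition) : μ.sortedParts.sum = n := by
  rw [← Multiset.sum_coe, μ.coe_sortedParts, μ.parts_sum]

theorem Nat.Partition.length_sortedParts (μ : n.Partition) :
    μ.sortedParts.length = Multiset.card μ.parts := by
  rw [← Multiset.coe_card, μ.coe_sortedParts]

theorem Nat.Partition.pos_of_mem_sortedParts {μ : n.Partition} {p : ℕ}
    (hp : p ∈ μ.sortedParts) : 0 < p :=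
  μ.parts_pos (by rwa [← μ.coe_sortedParts, Multiset.mem_coe])

theorem sigOfPartition_le_one (μ : n.Partition) (x : Fin (n - 1)) :
    sigOfPartition n μ x ≤ 1 := by
  unfold sigOfPartition
  split <;> omega

theorem sigOfPartition_pos_iff (μ : n.Partition) (x : Fin (n - 1)) :
    0 < sigOfPartition n μ x ↔ IsBlockLetter μ.sortedParts 0 x.1 := by
  have := x.2
  simp only [IsBlockLetter, μ.sum_sortedParts]
  unfold sigOfPartition
  split <;> simp_all [Nat.Partition.sortedParts]
  omega

theorem cycleType_prod_and_length_of_mem_signatureWords {μ : n.Partition} {w : List (Fin (n - 1))}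
    (hw : w ∈ signatureWords (sigOfPartition n μ)) :
    (w.map (transposGen n)).prod.cycleType = μ.parts.filter (2 ≤ ·) ∧
      w.length + Multiset.card μ.parts = n := by
  have := cycleType_prod_transposGen_of_mem_iff (fun _ => μ.pos_of_mem_sortedParts)
    (a := 0) (by rw [μ.sum_sortedParts, zero_add])
    (nodup_of_mem_signatureWords (sigOfPartition_le_one μ) hw) fun x =>
      (mem_iff_of_mem_signatureWords hw x).trans (sigOfPartition_pos_iff μ x)
  rwa [← Multiset.filter_coe, μ.coe_sortedParts, μ.sum_sortedParts,
    μ.length_sortedParts] at this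

theorem ncard_signatureWords_sigOfPartition (μ : n.Partition) :
    (signatureWords (sigOfPartition n μ)).ncard = (n - Multiset.card μ.parts).factorial := by
  have hw₀ := filter_mem_signatureWords (sigOfPartition_le_one μ)
  rw [signatureWords_eq_setOf_perm hw₀,
    ncard_setOf_perm (nodup_of_mem_signatureWords (sigOfPartition_le_one μ) hw₀)]
  have := (cycleType_prod_and_length_of_mem_signatureWords hw₀).2
  congr 1
  omega

/-- The entry of the signature vector `V_{α(μ)}` at the class `C^ν`. -/
noncomputable def signatureCount (μ ν : n.Partition) : ℕ :=
  {w | w ∈ signatureWords (sigOfPartition n μ) ∧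
    (w.map (transposGen n)).prod ∈ cycleTypeClass n ν}.ncard

theorem signatureCount_eq_ite (μ ν : n.Partition) :
    signatureCount μ ν = if μ = ν then (n - Multiset.card μ.parts).factorial else 0 := by
  split_ifs with h
  · subst h
    rw [signatureCount, ← ncard_signatureWords_sigOfPartition μ]
    congr 1
    ext w
    exact and_iff_left_of_imp fun hw => (cycleType_prod_and_length_of_mem_signatureWords hw).1
  · rw [signatureCount]
    convert Set.ncard_empty (List (Fin (n - 1)))
    refine Set.eq_empty_of_forall_notMem fun w ⟨hw, hν⟩ => h ?_
    exact Nat.Partition.ext_of_filter_two_le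
      ((cycleType_prod_and_length_of_mem_signatureWords hw).1.symm.trans hν)

theorem linearIndependent_signatureCount {ι : Type*} [Fintype ι] [DecidableEq ι]
    {μs : ι → n.Partition} (hμs : Function.Injective μs) :
    LinearIndependent ℚ fun i j => (signatureCount (μs i) (μs j) : ℚ) := by
  have hdiag : (fun i j => (signatureCount (μs i) (μs j) : ℚ)) =
      Matrix.diagonal fun i => ((n - Multiset.card (μs i).parts).factorial : ℚ) := by
    ext i j
    simp only [signatureCount_eq_ite, hμs.eq_iff, Matrix.diagonal_apply]
    split_ifs <;> simp
  rw [hdiag]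
  exact Matrix.linearIndependent_rows_of_det_ne_zero <| by
    simp [Matrix.det_diagonal, Finset.prod_ne_zero_iff, Nat.factorial_ne_zero]

end Partition

theorem symmetricGroup_partition_ISS_general (n : ℕ) (μ : n.Partition) :
    (∀ w : List (Fin (n - 1)), (∀ k, w.count k = sigOfPartition n μ k) →
      (w.map (transposGen n)).prod ∈ cycleTypeClass n μ) ∧
    ({w : List (Fin (n - 1)) | ∀ k, w.count k = sigOfPartition n μ k}.ncard
      = Nat.factorial (n - Multiset.card μ.parts)) ∧
    (∀ (r : ℕ) (μs : Fin r → n.Partition), Function.Bijective μs →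
      (∀ i j : Fin r,
        ({w : List (Fin (n - 1)) | (∀ k, w.count k = sigOfPartition n (μs i) k) ∧
            (w.map (transposGen n)).prod ∈ cycleTypeClass n (μs j)}.ncard
          = if i = j then Nat.factorial (n - Multiset.card (μs i).parts) else 0)) ∧
      LinearIndependent ℚ (fun i : Fin r => fun j : Fin r =>
        (({w : List (Fin (n - 1)) | (∀ k, w.count k = sigOfPartition n (μs i) k) ∧
            (w.map (transposGen n)).prod ∈ cycleTypeClass n (μs j)}.ncard : ℚ)))) := by
  refine ⟨fun w hw => (cycleType_prod_and_length_of_mem_signatureWords hw).1,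
    ncard_signatureWords_sigOfPartition μ, fun r μs hμs => ⟨fun i j => ?_,
      linearIndependent_signatureCount hμs.1⟩⟩
  exact (signatureCount_eq_ite (μs i) (μs j)).trans (if_congr hμs.1.eq_iff rfl rfl)

/-- For `Sₙ` with Coxeter generating set `T = {(1,2), …, (n-1,n)}` and a partition `μ` of `n`
with `k` parts: every word of signature `α(μ)` multiplies to an element of `C^μ`; the number
of words of signature `α(μ)` is `(n-k)!`; and consequently, for any enumeration `μ₁, …, μ_r`
of all partitions of `n`, the signatures `α(μ₁), …, α(μ_r)` form an independent signature
sequence of `Sₙ` whose independent signature matrix (with respect to the ordering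
`C^{μ₁}, …, C^{μ_r}` of the conjugacy classes) is `diag((n-k₁)!, …, (n-k_r)!)`. -/
theorem symmetricGroup_partition_ISS (n : ℕ) (hn : 1 ≤ n) (μ : n.Partition) :
    (∀ w : List (Fin (n - 1)), (∀ k, w.count k = sigOfPartition n μ k) →
      (w.map (transposGen n)).prod ∈ cycleTypeClass n μ) ∧
    ({w : List (Fin (n - 1)) | ∀ k, w.count k = sigOfPartition n μ k}.ncard
      = Nat.factorial (n - Multiset.card μ.parts)) ∧
    (∀ (r : ℕ) (μs : Fin r → n.Partition), Function.Bijective μs →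
      (∀ i j : Fin r,
        ({w : List (Fin (n - 1)) | (∀ k, w.count k = sigOfPartition n (μs i) k) ∧
            (w.map (transposGen n)).prod ∈ cycleTypeClass n (μs j)}.ncard
          = if i = j then Nat.factorial (n - Multiset.card (μs i).parts) else 0)) ∧
      LinearIndependent ℚ (fun i : Fin r => fun j : Fin r =>
        (({w : List (Fin (n - 1)) | (∀ k, w.count k = sigOfPartition n (μs i) k) ∧
            (w.map (transposGen n)).prod ∈ cycleTypeClass n (μs j)}.ncard : ℚ)))) :=
  symmetricGroup_partition_ISS_general n μ
end
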